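/- (Trial-energy integral identity, eq. (4.5)) Let ω > 0, α ∈ (0,π), γ ∈ [0,π/2], a ∈ ℝ, Λ ∈ ℝ. Let s̃(θ) = a for θ ∈ (−π+α, 0) and s̃(θ) = 1 for θ ∈ (0, α). Let g : (−π+α, α) → ℝ be continuous and piecewise C¹ with g and g′ square-integrable, and set u₀(ρ,θ) = e^{−ωρ²/2} e^{−iρ g(θ)}. Then ∫_{−π+α}^{α} ∫_0^{∞} [ |∂_ρ u₀|² + ρ^{−2} |(∂_θ + i s̃(θ)(ρ²/2)cos γ) u₀|² + s̃(θ)² ρ² sin²γ sin²θ |u₀|² − Λ|u₀|² ] ρ dρ dθ = (1/(2ω)) ∫_{−π+α}^{α} (g(θ)² + g′(θ)² − Λ) dθ − (√π cos γ/(4 ω^{3/2})) ∫_{−π+α}^{α} s̃(θ) g′(θ) dθ + (1/(2ω²)) ∫_{−π+α}^{α} ( ω² + s̃(θ)² sin²γ sin²θ + (1/4) s̃(θ)² cos²γ ) dθ. -/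

import Mathlib

/-
Since `|u₀|² = e^{-ωρ²}` and the phase `e^{-iρg(θ)}` only enters through its derivatives, for
each fixed `θ` the radial integrand is a cubic polynomial in `ρ` times `e^{-ωρ²}`. The Gaussian
moments `∫₀^∞ ρⁿ e^{-ωρ²} dρ = Γ((n+1)/2) / (2 ω^{(n+1)/2})` for `n = 1, 2, 3` are `1/(2ω)`,
`√π/(4ω^{3/2})` and `1/(2ω²)`, which gives the inner integral in closed form; the outer integral
then splits linearly. The term `∫ s̃ g'` makes sense because `g'`, being an a.e. derivative, is
measurable, so square integrability makes it integrable on the bounded angular interval.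
-/

open MeasureTheory Real Set Filter

noncomputable section

namespace MagStep

/-- The Gaussian trial function `u₀(ρ,θ) = e^{-ωρ²/2} e^{-iρ g(θ)}`. -/
def u0 (ω : ℝ) (g : ℝ → ℝ) (ρ θ : ℝ) : ℂ :=
  Complex.exp (-(ω * ρ ^ 2 / 2 : ℂ)) * Complex.exp (-(Complex.I * ρ * g θ))

/-- The angular step function `s̃`: `a` for `θ < 0` and `1` for `θ > 0`. -/
def stg (a θ : ℝ) : ℝ := if θ < 0 then a else 1

section GaussianMoments

variable {b : ℝ}

lemma integral_pow_mul_exp_neg_mul_sq_Ioi (hb : 0 < b) (n : ℕ) :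
    ∫ x in Ioi (0 : ℝ), x ^ n * exp (-b * x ^ 2)
      = b ^ (-((n : ℝ) + 1) / 2) * (1 / 2) * Gamma (((n : ℝ) + 1) / 2) := by
  rw [← integral_rpow_mul_exp_neg_mul_rpow two_pos (by linarith [n.cast_nonneg (α := ℝ)]) hb]
  refine setIntegral_congr_fun measurableSet_Ioi fun x _ => ?_
  rw [rpow_two, rpow_natCast]

lemma integrableOn_pow_mul_exp_neg_mul_sq_Ioi (hb : 0 < b) (n : ℕ) :
    IntegrableOn (fun x : ℝ => x ^ n * exp (-b * x ^ 2)) (Ioi 0) :=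
  (integrableOn_rpow_mul_exp_neg_mul_sq hb (s := n)
    (by linarith [n.cast_nonneg (α := ℝ)])).congr_fun (fun x _ => by simp only [rpow_natCast])
    measurableSet_Ioi

lemma integral_mul_exp_neg_mul_sq_Ioi (hb : 0 < b) :
    ∫ x in Ioi (0 : ℝ), x * exp (-b * x ^ 2) = 1 / (2 * b) := by
  simpa [Gamma_one, rpow_neg_one] using integral_pow_mul_exp_neg_mul_sq_Ioi hb 1

lemma integral_sq_mul_exp_neg_mul_sq_Ioi (hb : 0 < b) :
    ∫ x in Ioi (0 : ℝ), x ^ 2 * exp (-b * x ^ 2) = √π / (4 * b ^ ((3 : ℝ) / 2)) := by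
  have hGamma : Gamma (3 / 2) = √π / 2 := by
    rw [show (3 / 2 : ℝ) = 1 / 2 + 1 by norm_num, Gamma_add_one (by norm_num),
      Gamma_one_half_eq]
    ring
  rw [integral_pow_mul_exp_neg_mul_sq_Ioi hb 2]
  norm_num [hGamma, rpow_neg hb.le]
  field_simp
  norm_num

lemma integral_cube_mul_exp_neg_mul_sq_Ioi (hb : 0 < b) :
    ∫ x in Ioi (0 : ℝ), x ^ 3 * exp (-b * x ^ 2) = 1 / (2 * b ^ 2) := by
  rw [integral_pow_mul_exp_neg_mul_sq_Ioi hb 3]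
  norm_num [Gamma_two]

lemma integral_cubic_mul_exp_neg_mul_sq_Ioi (hb : 0 < b) (A B C : ℝ) :
    ∫ x in Ioi (0 : ℝ), (A * x ^ 3 + B * x ^ 2 + C * x) * exp (-b * x ^ 2)
      = A / (2 * b ^ 2) + B * (√π / (4 * b ^ ((3 : ℝ) / 2))) + C / (2 * b) := by
  have hI := integrableOn_pow_mul_exp_neg_mul_sq_Ioi hb
  have hI1 : IntegrableOn (fun x => x * exp (-b * x ^ 2)) (Ioi 0) := by simpa using hI 1
  have hsplit : ∀ x : ℝ, (A * x ^ 3 + B * x ^ 2 + C * x) * exp (-b * x ^ 2)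
      = A * (x ^ 3 * exp (-b * x ^ 2)) + B * (x ^ 2 * exp (-b * x ^ 2))
        + C * (x * exp (-b * x ^ 2)) := fun x => by ring
  simp_rw [hsplit]
  rw [integral_add ?_ (hI1.const_mul C), integral_add ((hI 3).const_mul A) ((hI 2).const_mul B),
    integral_const_mul, integral_const_mul, integral_const_mul,
    integral_cube_mul_exp_neg_mul_sq_Ioi hb, integral_sq_mul_exp_neg_mul_sq_Ioi hb,
    integral_mul_exp_neg_mul_sq_Ioi hb]
  · ring
  · exact ((hI 3).const_mul A).add ((hI 2).const_mul B)

end GaussianMoments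

lemma norm_u0_sq (ω : ℝ) (g : ℝ → ℝ) (ρ θ : ℝ) : ‖u0 ω g ρ θ‖ ^ 2 = exp (-ω * ρ ^ 2) := by
  simp only [u0, norm_mul, Complex.norm_exp]
  rw [← exp_add, ← exp_nat_mul, ← Complex.ofReal_pow]
  norm_num [Complex.div_re, ← Complex.ofReal_pow]
  ring_nf

lemma integral_radial_energy {ω : ℝ} (hω : 0 < ω) {u : ℝ → ℂ}
    (hu : ∀ ρ, ‖u ρ‖ ^ 2 = exp (-ω * ρ ^ 2)) (G G' s c p q Λ : ℝ) :
    ∫ ρ in Ioi (0 : ℝ),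
      (‖(-(ω * ρ : ℂ) - Complex.I * (G : ℂ)) * u ρ‖ ^ 2
        + (1 / ρ ^ 2) * ‖Complex.I * ((s * (ρ ^ 2 / 2) * c - ρ * G' : ℝ) : ℂ) * u ρ‖ ^ 2
        + s ^ 2 * ρ ^ 2 * p ^ 2 * q ^ 2 * ‖u ρ‖ ^ 2
        - Λ * ‖u ρ‖ ^ 2) * ρ
    = (1 / (2 * ω)) * (G ^ 2 + G' ^ 2 - Λ)
      - (√π * c / (4 * ω ^ ((3 : ℝ) / 2))) * (s * G')
      + (1 / (2 * ω ^ 2)) * (ω ^ 2 + s ^ 2 * p ^ 2 * q ^ 2 + (1 / 4) * s ^ 2 * c ^ 2) := by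
  calc _ = ∫ ρ in Ioi (0 : ℝ), ((ω ^ 2 + s ^ 2 * p ^ 2 * q ^ 2 + s ^ 2 * c ^ 2 / 4) * ρ ^ 3
          + (-(s * c * G')) * ρ ^ 2 + (G ^ 2 + G' ^ 2 - Λ) * ρ) * exp (-ω * ρ ^ 2) :=
        setIntegral_congr_fun measurableSet_Ioi fun ρ hρ => ?_
    _ = _ := by rw [integral_cubic_mul_exp_neg_mul_sq_Ioi hω]; ring
  have hρ0 : ρ ≠ 0 := (mem_Ioi.mp hρ).ne'
  have hradial : ‖-(ω * ρ : ℂ) - Complex.I * G‖ ^ 2 = (ω * ρ) ^ 2 + G ^ 2 := by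
    have hcart :
        -(ω * ρ : ℂ) - Complex.I * G = ((-(ω * ρ) : ℝ) : ℂ) + ((-G : ℝ) : ℂ) * Complex.I := by
      push_cast
      ring
    rw [hcart, Complex.norm_add_mul_I, sq_sqrt (by positivity)]
    ring
  have hangular : ‖Complex.I * ((s * (ρ ^ 2 / 2) * c - ρ * G' : ℝ) : ℂ)‖ ^ 2
      = (s * (ρ ^ 2 / 2) * c - ρ * G') ^ 2 := by
    rw [norm_mul, Complex.norm_I, one_mul, Complex.norm_real, Real.norm_eq_abs, sq_abs]
  rw [norm_mul, norm_mul, mul_pow, mul_pow, hradial, hangular, hu]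
  field_simp
  ring

lemma aestronglyMeasurable_of_hasDerivAt_off_countable {F : Type*} [NormedAddCommGroup F]
    [NormedSpace ℝ F] [CompleteSpace F] {f f' : ℝ → F} {s S : Set ℝ} (hs : MeasurableSet s)
    (hS : S.Countable) (hf : ∀ x ∈ s \ S, HasDerivAt f (f' x) x) :
    AEStronglyMeasurable f' (volume.restrict s) := by
  have hS_ae : ∀ᵐ x ∂(volume.restrict s), x ∉ S :=
    ae_restrict_of_ae ((measure_eq_zero_iff_ae_notMem).1 (hS.measure_zero volume))
  refine (aestronglyMeasurable_deriv f _).congr ?_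
  filter_upwards [ae_restrict_mem hs, hS_ae] with x hxs hxS
  exact (hf x ⟨hxs, hxS⟩).deriv

lemma integrableOn_of_integrableOn_sq {α : Type*} [MeasurableSpace α] {μ : Measure α} {s : Set α}
    {f : α → ℝ} (hs : μ s ≠ ⊤) (hf : AEStronglyMeasurable f (μ.restrict s))
    (hf2 : IntegrableOn (fun x => f x ^ 2) s μ) : IntegrableOn f s μ := by
  have := isFiniteMeasure_restrict.2 hs
  exact ((memLp_two_iff_integrable_sq hf).2 hf2).integrable one_le_two

@[fun_prop]
lemma measurable_stg (a : ℝ) : Measurable (stg a) :=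
  Measurable.ite measurableSet_Iio measurable_const measurable_const

lemma abs_stg_le (a θ : ℝ) : |stg a θ| ≤ max |a| 1 := by
  unfold stg
  split
  · exact le_max_left _ _
  · simp

lemma integrableOn_stg_mul {μ : Measure ℝ} {s : Set ℝ} {f : ℝ → ℝ} (hf : IntegrableOn f s μ)
    (a : ℝ) : IntegrableOn (fun θ => stg a θ * f θ) s μ :=
  hf.bdd_mul (measurable_stg a).aestronglyMeasurable
    (ae_of_all _ fun θ => (Real.norm_eq_abs _).trans_le (abs_stg_le a θ))

lemma stg_sq_le (a θ : ℝ) : stg a θ ^ 2 ≤ max |a| 1 ^ 2 := by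
  simpa only [sq_abs] using pow_le_pow_left₀ (abs_nonneg _) (abs_stg_le a θ) 2

lemma integrableOn_angular_potential {μ : Measure ℝ} {s : Set ℝ} (hs : μ s ≠ ⊤) (ω a k c : ℝ) :
    IntegrableOn (fun θ => ω ^ 2 + stg a θ ^ 2 * k ^ 2 * sin θ ^ 2 + (1 / 4) * stg a θ ^ 2 * c ^ 2)
      s μ := by
  refine Measure.integrableOn_of_bounded
    (M := ω ^ 2 + max |a| 1 ^ 2 * k ^ 2 + (1 / 4) * max |a| 1 ^ 2 * c ^ 2) hs (by fun_prop)
    (ae_of_all _ fun θ => ?_)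
  have hstg := stg_sq_le a θ
  have hsin : stg a θ ^ 2 * k ^ 2 * sin θ ^ 2 ≤ max |a| 1 ^ 2 * k ^ 2 := by
    simpa using mul_le_mul (mul_le_mul_of_nonneg_right hstg (sq_nonneg k)) (sin_sq_le_one θ)
      (sq_nonneg _) (by positivity)
  rw [Real.norm_eq_abs, abs_of_nonneg (by positivity)]
  nlinarith [sq_nonneg c]

theorem trial_energy_identity_general (ω α γ a Λ : ℝ) (hω : 0 < ω)
    (g g' : ℝ → ℝ) (S : Set ℝ) (hS : S.Finite)
    (hgd : ∀ θ ∈ Ioo (-π + α) α \ S, HasDerivAt g (g' θ) θ)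
    (hg2 : IntegrableOn (fun θ => g θ ^ 2) (Ioo (-π + α) α))
    (hg'2 : IntegrableOn (fun θ => g' θ ^ 2) (Ioo (-π + α) α)) :
    (∫ θ in Ioo (-π + α) α, ∫ ρ in Ioi (0 : ℝ),
      (‖(-(ω * ρ : ℂ) - Complex.I * (g θ : ℂ)) * u0 ω g ρ θ‖ ^ 2
        + (1 / ρ ^ 2) *
            ‖Complex.I * ((stg a θ * (ρ ^ 2 / 2) * Real.cos γ - ρ * g' θ : ℝ) : ℂ) *
              u0 ω g ρ θ‖ ^ 2
        + stg a θ ^ 2 * ρ ^ 2 * Real.sin γ ^ 2 * Real.sin θ ^ 2 * ‖u0 ω g ρ θ‖ ^ 2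
        - Λ * ‖u0 ω g ρ θ‖ ^ 2) * ρ)
    = (1 / (2 * ω)) * (∫ θ in Ioo (-π + α) α, (g θ ^ 2 + g' θ ^ 2 - Λ))
      - (Real.sqrt π * Real.cos γ / (4 * ω ^ ((3 : ℝ) / 2))) *
          (∫ θ in Ioo (-π + α) α, stg a θ * g' θ)
      + (1 / (2 * ω ^ 2)) *
          (∫ θ in Ioo (-π + α) α,
            (ω ^ 2 + stg a θ ^ 2 * Real.sin γ ^ 2 * Real.sin θ ^ 2
              + (1 / 4) * stg a θ ^ 2 * Real.cos γ ^ 2)) := by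
  set T := Ioo (-π + α) α
  have hT : volume T ≠ ⊤ := measure_Ioo_lt_top.ne
  have hg' : IntegrableOn g' T := integrableOn_of_integrableOn_sq hT
    (aestronglyMeasurable_of_hasDerivAt_off_countable measurableSet_Ioo hS.countable hgd) hg'2
  have hF1 : IntegrableOn (fun θ => g θ ^ 2 + g' θ ^ 2 - Λ) T :=
    (hg2.add hg'2).sub (integrableOn_const hT)
  have hF2 : IntegrableOn (fun θ => stg a θ * g' θ) T := integrableOn_stg_mul hg' a
  have hF3 := integrableOn_angular_potential hT ω a (sin γ) (cos γ)
  rw [setIntegral_congr_fun measurableSet_Ioo fun θ _ =>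
      integral_radial_energy hω (norm_u0_sq ω g · θ) _ _ _ _ _ _ Λ,
    integral_add ?_ (hF3.const_mul _), integral_sub (hF1.const_mul _) (hF2.const_mul _),
    integral_const_mul, integral_const_mul, integral_const_mul]
  exact (hF1.const_mul _).sub (hF2.const_mul _)

/-- **Trial-energy integral identity (eq. (4.5)).** -/
theorem trial_energy_identity (ω α γ a Λ : ℝ) (hω : 0 < ω) (hα : α ∈ Ioo 0 π)
    (hγ : γ ∈ Icc 0 (π / 2))
    (g g' : ℝ → ℝ) (S : Set ℝ) (hS : S.Finite)
    (hgc : ContinuousOn g (Ioo (-π + α) α))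
    (hgd : ∀ θ ∈ Ioo (-π + α) α \ S, HasDerivAt g (g' θ) θ)
    (hg2 : IntegrableOn (fun θ => g θ ^ 2) (Ioo (-π + α) α))
    (hg'2 : IntegrableOn (fun θ => g' θ ^ 2) (Ioo (-π + α) α)) :
    (∫ θ in Ioo (-π + α) α, ∫ ρ in Ioi (0 : ℝ),
      (‖(-(ω * ρ : ℂ) - Complex.I * (g θ : ℂ)) * u0 ω g ρ θ‖ ^ 2
        + (1 / ρ ^ 2) *
            ‖Complex.I * ((stg a θ * (ρ ^ 2 / 2) * Real.cos γ - ρ * g' θ : ℝ) : ℂ) *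
              u0 ω g ρ θ‖ ^ 2
        + stg a θ ^ 2 * ρ ^ 2 * Real.sin γ ^ 2 * Real.sin θ ^ 2 * ‖u0 ω g ρ θ‖ ^ 2
        - Λ * ‖u0 ω g ρ θ‖ ^ 2) * ρ)
    = (1 / (2 * ω)) * (∫ θ in Ioo (-π + α) α, (g θ ^ 2 + g' θ ^ 2 - Λ))
      - (Real.sqrt π * Real.cos γ / (4 * ω ^ ((3 : ℝ) / 2))) *
          (∫ θ in Ioo (-π + α) α, stg a θ * g' θ)
      + (1 / (2 * ω ^ 2)) *
          (∫ θ in Ioo (-π + α) α,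
            (ω ^ 2 + stg a θ ^ 2 * Real.sin γ ^ 2 * Real.sin θ ^ 2
              + (1 / 4) * stg a θ ^ 2 * Real.cos γ ^ 2)) :=
  trial_energy_identity_general ω α γ a Λ hω g g' S hS hgd hg2 hg'2

end MagStep
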